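/- Let K ⊆ M ⊆ L be a tower of difference fields with M transformally algebraic over K. Then L is almost transformally separable over K if and only if M is almost transformally separable over K and L is almost transformally separable over M. -/

import Mathlib

/-! The implication from right to left is a direct composition, and `L/K` passes almost
transformal separability down to `M/K` since `σ(M) ≤ σ(L)`. The content is `L/M`.
Algebraic disjointness is symmetric, so for `L/K` it says that finite families in `σ(L)`
independent over `σ(K)` stay independent over `K`; enlarging the base inside `σ(L)` upgrades
this to: families in `σ(L)` independent over `σ(M)` stay independent over `K(σ(M))`.
Transformal algebraicity makes `M` algebraic over `K(σ(M))`: if `a, …, σⁿ⁻¹a` are independent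
over `K` but `a, …, σⁿa` are not, then `σa, …, σⁿa` are independent over `σ(K)`, hence over `K`,
and `a` is algebraic over them. So families in `σ(L)` independent over `σ(M)` are independent
over `M`, which is the symmetric form of `L/M` being almost transformally separable. -/

/-- A family `b` is algebraically independent over the subfield `A`. -/
def AlgIndepOver {Ω : Type*} [Field Ω] (A : Subfield Ω) {ι : Type*} (b : ι → Ω) : Prop :=
  ∀ P : MvPolynomial ι Ω, (∀ m, MvPolynomial.coeff m P ∈ A) →
    MvPolynomial.eval b P = 0 → P = 0

/-- Subfields `B` and `C` of `Ω` are algebraically disjoint over `A`. -/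
def AlgDisjOver {Ω : Type*} [Field Ω] (A B C : Subfield Ω) : Prop :=
  ∀ (n : ℕ) (b : Fin n → Ω), (∀ i, b i ∈ B) → AlgIndepOver A b → AlgIndepOver C b

/-- `L/K` is almost transformally separable: `K` and `σ(L)` are algebraically disjoint
over `σ(K)`. -/
def AlmostTransSepOver {Ω : Type*} [Field Ω] (σ : Ω →+* Ω) (K L : Subfield Ω) : Prop :=
  AlgDisjOver (K.map σ) K (L.map σ)

/-- `a` is transformally algebraic over the subfield `K` of `(Ω, σ)`. -/
def TransAlgElemOver {Ω : Type*} [Field Ω] (σ : Ω →+* Ω) (K : Subfield Ω) (a : Ω) : Prop :=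
  ¬ AlgIndepOver K (fun n : ℕ => (⇑σ)^[n] a)

open MvPolynomial Set

section

variable {Ω : Type*} [Field Ω]

/-- Defined through `IntermediateField.adjoin`, so that Mathlib's API for algebraic independence
and algebraicity over `IntermediateField.adjoin F s` applies to `F.adjoin s` definitionally. -/
def Subfield.adjoin (F : Subfield Ω) (s : Set Ω) : Subfield Ω :=
  (IntermediateField.adjoin F s).toSubfield

namespace Subfield

variable {F G : Subfield Ω} {s t : Set Ω}

theorem le_adjoin (F : Subfield Ω) (s : Set Ω) : F ≤ F.adjoin s := fun x hx =>
  (IntermediateField.adjoin F s).algebraMap_mem ⟨x, hx⟩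

theorem subset_adjoin (F : Subfield Ω) (s : Set Ω) : s ⊆ F.adjoin s :=
  IntermediateField.subset_adjoin F s

theorem adjoin_le (hFG : F ≤ G) (hs : s ⊆ G) : F.adjoin s ≤ G :=
  Subfield.closure_le.2 <| union_subset (by rintro _ ⟨x, rfl⟩; exact hFG x.2) hs

theorem adjoin_mono (hFG : F ≤ G) (hst : s ⊆ t) : F.adjoin s ≤ G.adjoin t :=
  adjoin_le (hFG.trans (le_adjoin G t)) (hst.trans (subset_adjoin G t))

end Subfield

theorem IsAlgebraic.mono_subfield {F G : Subfield Ω} (hFG : F ≤ G) {x : Ω}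
    (hx : IsAlgebraic F x) : IsAlgebraic G x := by
  let _ : Algebra F G := (Subfield.inclusion hFG).toAlgebra
  have : IsScalarTower F G Ω := .of_algebraMap_eq fun _ => rfl
  exact hx.tower_top G

section AlgIndepOver

variable {F G : Subfield Ω} {ι κ : Type*} {b : ι → Ω}

theorem algIndepOver_iff : AlgIndepOver F b ↔ AlgebraicIndependent F b := by
  rw [AlgebraicIndependent, injective_iff_map_eq_zero]
  refine ⟨fun h p hp => ?_, fun h P hP hev => ?_⟩
  · apply MvPolynomial.map_injective (σ := ι) (algebraMap F Ω) (algebraMap F Ω).injective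
    rw [map_zero]
    exact h _ (fun m => by rw [coeff_map]; exact (coeff m p).2) (by rwa [eval_map, ← aeval_def])
  · obtain ⟨p, rfl⟩ := (mem_range_map_iff_coeffs_subset (f := algebraMap F Ω)).2 fun c hc => by
      obtain ⟨m, -, rfl⟩ := mem_coeffs_iff.1 hc
      exact ⟨⟨_, hP m⟩, rfl⟩
    rw [h p (by rwa [eval_map, ← aeval_def] at hev), map_zero]

theorem AlgIndepOver.mono (h : AlgIndepOver G b) (hFG : F ≤ G) : AlgIndepOver F b :=
  fun P hP => h P fun m => hFG (hP m)

theorem AlgIndepOver.comp (h : AlgIndepOver F b) (f : κ → ι) (hf : Function.Injective f) :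
    AlgIndepOver F (b ∘ f) :=
  algIndepOver_iff.2 ((algIndepOver_iff.1 h).comp f hf)

theorem algIndepOver_sumElim_iff {c : κ → Ω} :
    AlgIndepOver F (Sum.elim c b) ↔ AlgIndepOver F b ∧ AlgIndepOver (F.adjoin (range b)) c := by
  simp only [algIndepOver_iff]
  exact AlgebraicIndependent.sumElim_iff.trans
    (and_congr_right' IntermediateField.algebraicIndependent_adjoin_iff.symm)

theorem algIndepOver_sumElim_comm {c : κ → Ω} :
    AlgIndepOver F (Sum.elim c b) ↔ AlgIndepOver F (Sum.elim b c) := by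
  simp only [algIndepOver_iff]
  exact (algebraicIndependent_equiv' (Equiv.sumComm ι κ) (by ext (_ | _) <;> rfl)).symm

theorem AlgIndepOver.adjoin_of_isAlgebraic (h : AlgIndepOver F b) {s : Set Ω}
    (hs : ∀ x ∈ s, IsAlgebraic F x) : AlgIndepOver (F.adjoin s) b := by
  have := IntermediateField.isAlgebraic_adjoin fun x hx => (hs x hx).isIntegral
  exact algIndepOver_iff.2 ((algIndepOver_iff.1 h).extendScalars (IntermediateField.adjoin F s))

theorem AlgIndepOver.isAlgebraic_of_not_cons {n : ℕ} {t : Fin n → Ω} (ht : AlgIndepOver F t)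
    {a : Ω} (ha : ¬ AlgIndepOver F (Fin.cons a t : Fin (n + 1) → Ω)) :
    IsAlgebraic (F.adjoin (range t)) a := by
  rw [algIndepOver_iff, algebraicIndependent_equiv' (finSuccEquiv n)
    (f := fun o : Option (Fin n) => o.elim a t) (by ext i; cases i using Fin.cases <;> simp),
    AlgebraicIndependent.option_iff] at ha
  exact IntermediateField.isAlgebraic_adjoin_iff.2
    (not_not.1 (not_and.1 ha (algIndepOver_iff.1 ht)))

theorem exists_algIndepOver_subset_isAlgebraic (F : Subfield Ω) (s : Set Ω) :
    ∃ I ⊆ s, AlgIndepOver F ((↑) : I → Ω) ∧ ∀ x ∈ s, IsAlgebraic (F.adjoin I) x := by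
  obtain ⟨I, hI⟩ := (AlgebraicIndependent.matroid F Ω).exists_isBasis s
  obtain ⟨hind, hIs, halg⟩ := AlgebraicIndependent.matroid_isBasis_iff.1 hI
  exact ⟨I, hIs, algIndepOver_iff.2 hind,
    fun x hx => IntermediateField.isAlgebraic_adjoin_iff.2 (halg x hx)⟩

theorem AlgIndepOver.adjoin_of_forall_finset {s : Set Ω}
    (h : ∀ T : Finset Ω, ↑T ⊆ s → AlgIndepOver (F.adjoin T) b) : AlgIndepOver (F.adjoin s) b := by
  classical
  intro P hP hev
  choose! T hTs hT using fun m => IntermediateField.exists_finset_of_mem_adjoin (hP m)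
  refine h (P.support.biUnion T) (by simpa using fun m _ => hTs m) P (fun m => ?_) hev
  by_cases hm : m ∈ P.support
  · exact IntermediateField.adjoin.mono F _ _ (Finset.subset_biUnion_of_mem T hm) (hT m)
  · rw [notMem_support_iff.1 hm]
    exact zero_mem _

theorem AlgIndepOver.map (σ : Ω →+* Ω) (h : AlgIndepOver F b) :
    AlgIndepOver (F.map σ) (σ ∘ b) := by
  intro P hP hev
  obtain ⟨Q, rfl⟩ := (mem_range_map_iff_coeffs_subset (f := σ)).2 fun c hc => by
    obtain ⟨m, -, rfl⟩ := mem_coeffs_iff.1 hc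
    obtain ⟨y, -, hy⟩ := Subfield.mem_map.1 (hP m)
    exact ⟨y, hy⟩
  have hQ : ∀ m, coeff m Q ∈ F := fun m => by
    obtain ⟨y, hy, hyQ⟩ := Subfield.mem_map.1 (hP m)
    rw [coeff_map, σ.injective.eq_iff] at hyQ
    exact hyQ ▸ hy
  rw [← map_eval, map_eq_zero_iff σ σ.injective] at hev
  rw [h Q hQ hev, map_zero]

theorem algIndepOver_of_forall_fin {x : ℕ → Ω}
    (h : ∀ n, AlgIndepOver F (fun i : Fin n => x i)) : AlgIndepOver F x := by
  refine algIndepOver_iff.2 (algebraicIndependent_of_finite_type fun t ht => ?_)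
  obtain ⟨n, hn⟩ := ht.bddAbove
  exact (algIndepOver_iff.1 (h (n + 1))).comp (fun i : t => ⟨i, Nat.lt_succ_of_le (hn i.2)⟩)
    fun i j hij => Subtype.ext (congrArg Fin.val hij)

theorem exists_algIndepOver_fin_and_not_succ {x : ℕ → Ω} (hx : ¬ AlgIndepOver F x) :
    ∃ n, AlgIndepOver F (fun i : Fin n => x i) ∧
      ¬ AlgIndepOver F (fun i : Fin (n + 1) => x i) := by
  classical
  have hdep : ∃ n, ¬ AlgIndepOver F (fun i : Fin n => x i) := by
    by_contra! hall
    exact hx (algIndepOver_of_forall_fin hall)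
  obtain ⟨n, hn⟩ : ∃ n, Nat.find hdep = n + 1 := Nat.exists_eq_succ_of_ne_zero fun h0 =>
    (h0 ▸ Nat.find_spec hdep) (algIndepOver_iff.2 algebraicIndependent_empty_type)
  exact ⟨n, not_not.1 (Nat.find_min hdep (by omega)), hn ▸ Nat.find_spec hdep⟩

end AlgIndepOver

section AlgDisjOver

variable {A B C D : Subfield Ω}

theorem AlgDisjOver.algIndepOver (h : AlgDisjOver A B C) {ι : Type*} [Finite ι] {b : ι → Ω}
    (hB : ∀ i, b i ∈ B) (hA : AlgIndepOver A b) : AlgIndepOver C b := by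
  obtain ⟨n, ⟨e⟩⟩ := Finite.exists_equiv_fin ι
  have := (h n (b ∘ e.symm) (fun i => hB _) (hA.comp _ e.symm.injective)).comp e e.injective
  rwa [Function.comp_assoc, e.symm_comp_self, Function.comp_id] at this

theorem AlgDisjOver.trans {B' D : Subfield Ω} (h : AlgDisjOver A B C) (h' : AlgDisjOver C B' D)
    (hB : B ≤ B') : AlgDisjOver A B D :=
  fun n b hb hA => h' n b (fun i => hB (hb i)) (h n b hb hA)

theorem AlgDisjOver.mono_right {C' : Subfield Ω} (h : AlgDisjOver A B C) (hC : C' ≤ C) :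
    AlgDisjOver A B C' :=
  fun n b hB hA => (h n b hB hA).mono hC

theorem AlgDisjOver.of_isAlgebraic {B' : Subfield Ω} (h : AlgDisjOver A C B)
    (halg : ∀ x ∈ B', IsAlgebraic B x) : AlgDisjOver A C B' :=
  fun n u hC hA => ((h n u hC hA).adjoin_of_isAlgebraic halg).mono (Subfield.subset_adjoin B B')

/-- Independence over `B(s)` is decided on finite subsets of `s`, and each of these is algebraic
over an `A`-independent subset of itself. -/
theorem algIndepOver_adjoin_of_finite_algIndepOver (hAB : A ≤ B) {s : Set Ω} {ι : Type*}
    {u : ι → Ω} (h : ∀ I ⊆ s, I.Finite → AlgIndepOver A ((↑) : I → Ω) →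
      AlgIndepOver (B.adjoin I) u) :
    AlgIndepOver (B.adjoin s) u := by
  refine AlgIndepOver.adjoin_of_forall_finset fun T hT => ?_
  obtain ⟨I, hIT, hI, halg⟩ := exists_algIndepOver_subset_isAlgebraic A (T : Set Ω)
  have hu := (h I (hIT.trans hT) (T.finite_toSet.subset hIT) hI).adjoin_of_isAlgebraic
    fun x hx => (halg x hx).mono_subfield (Subfield.adjoin_mono hAB subset_rfl)
  exact hu.mono (Subfield.adjoin_mono (Subfield.le_adjoin B I) subset_rfl)

theorem AlgDisjOver.symm (h : AlgDisjOver A B C) (hAC : A ≤ C) :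
    AlgDisjOver A C B := by
  intro n u hu hA
  refine (algIndepOver_adjoin_of_finite_algIndepOver le_rfl fun I hIB hI hIA => ?_).mono
    (Subfield.subset_adjoin A B)
  have : Finite I := hI
  have hIu := (h.algIndepOver (fun i => hIB i.2) hIA).mono
    (Subfield.adjoin_le hAC (range_subset_iff.2 hu))
  have huI := (algIndepOver_sumElim_iff.1 (algIndepOver_sumElim_comm.1
    (algIndepOver_sumElim_iff.2 ⟨hA, hIu⟩))).2
  rwa [Subtype.range_coe] at huI

theorem AlgDisjOver.adjoin (h : AlgDisjOver A C B) (hAB : A ≤ B) (hAD : A ≤ D) (hDC : D ≤ C) :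
    AlgDisjOver D C (B.adjoin D) := by
  intro n u hu hD
  refine algIndepOver_adjoin_of_finite_algIndepOver hAB fun I hID hI hIA => ?_
  have : Finite I := hI
  have huI := hD.mono (Subfield.adjoin_le hAD hID)
  have hsum := h.algIndepOver (b := Sum.elim u ((↑) : I → Ω))
    (by rintro (i | i); exacts [hu i, hDC (hID i.2)])
    (algIndepOver_sumElim_iff.2 ⟨hIA, by rwa [Subtype.range_coe]⟩)
  have huB := (algIndepOver_sumElim_iff.1 hsum).2
  rwa [Subtype.range_coe] at huB

end AlgDisjOver

theorem TransAlgElemOver.isAlgebraic_adjoin_map {σ : Ω →+* Ω} {K M : Subfield Ω}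
    (hMσ : ∀ x ∈ M, σ x ∈ M) (hKM : AlgDisjOver (K.map σ) (M.map σ) K) {a : Ω} (ha : a ∈ M)
    (hta : TransAlgElemOver σ K a) : IsAlgebraic (K.adjoin (M.map σ)) a := by
  obtain ⟨n, hn, hn1⟩ := exists_algIndepOver_fin_and_not_succ hta
  set t : Fin n → Ω := fun i => σ^[i + 1] a
  have htM : ∀ i, t i ∈ M.map σ := fun i =>
    ⟨σ^[i] a, MapsTo.iterate hMσ i ha, (Function.iterate_succ_apply' σ i a).symm⟩
  have ht : AlgIndepOver K t := hKM n t htM <| by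
    convert hn.map σ using 1
    ext i
    exact Function.iterate_succ_apply' σ i a
  have hcons : (fun i : Fin (n + 1) => σ^[i] a) = Fin.cons a t := by
    ext i
    cases i using Fin.cases <;> simp [t]
  exact (ht.isAlgebraic_of_not_cons (hcons ▸ hn1)).mono_subfield
    (Subfield.adjoin_mono le_rfl (range_subset_iff.2 htM))

end

theorem statement11_general {Ω : Type*} [Field Ω] (σ : Ω →+* Ω)
    (K M L : Subfield Ω)
    (hKσ : ∀ x ∈ K, σ x ∈ K) (hMσ : ∀ x ∈ M, σ x ∈ M)
    (hKM : K ≤ M) (hML : M ≤ L)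
    -- M is transformally algebraic over K
    (hta : ∀ a ∈ M, TransAlgElemOver σ K a) :
    AlmostTransSepOver σ K L ↔
      (AlmostTransSepOver σ K M ∧ AlmostTransSepOver σ M L) := by
  have hmap : Monotone (Subfield.map σ) := (Subfield.gc_map_comap σ).monotone_l
  constructor
  · intro hKL
    have hKM' : AlmostTransSepOver σ K M := hKL.mono_right (hmap hML)
    have halg : ∀ a ∈ M, IsAlgebraic (K.adjoin (M.map σ)) a := fun a ha =>
      (hta a ha).isAlgebraic_adjoin_map hMσ (hKM'.symm (hmap hKM)) ha
    have hLM : AlgDisjOver (M.map σ) (L.map σ) M :=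
      ((hKL.symm (hmap (hKM.trans hML))).adjoin (Subfield.map_le_iff_le_comap.2 hKσ)
        (hmap hKM) (hmap hML)).of_isAlgebraic halg
    exact ⟨hKM', hLM.symm (Subfield.map_le_iff_le_comap.2 hMσ)⟩
  · rintro ⟨hKM', hML'⟩
    exact hKM'.trans hML' hKM

theorem statement11 {Ω : Type*} [Field Ω] (σ : Ω →+* Ω)
    (K M L : Subfield Ω)
    (hKσ : ∀ x ∈ K, σ x ∈ K) (hMσ : ∀ x ∈ M, σ x ∈ M) (hLσ : ∀ x ∈ L, σ x ∈ L)
    (hKM : K ≤ M) (hML : M ≤ L)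
    -- M is transformally algebraic over K
    (hta : ∀ a ∈ M, TransAlgElemOver σ K a) :
    AlmostTransSepOver σ K L ↔
      (AlmostTransSepOver σ K M ∧ AlmostTransSepOver σ M L) :=
  statement11_general σ K M L hKσ hMσ hKM hML hta
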